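/- Let φ : (0,1) → ℝ be a C¹ diffeomorphism onto ℝ whose derivative tends to +∞ as t tends to 0 and as t tends to 1. Then for every constant A > 1 there exists a C¹ diffeomorphism φ̃ : (0,1) → ℝ which coincides with φ on a neighborhood of 0 and on a neighborhood of 1, and whose derivative satisfies φ̃'(t) > A for every t ∈ (0,1). -/

import Mathlib

/-!
Since `φ'` never vanishes and is large near `0`, it is positive, so `φ` is increasing and
`φ t → -∞` as `t → 0`. With `B = |A|`, add to `φ'` a bump `B Λ` equal to `B` on the middle
region where `φ'` may be small, and pay for its mass by subtracting `s θ (φ' - B)`, where `θ` is a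
bump near `0` with `∫ θ (φ' - B) > B ∫ Λ` (possible because `∫₀ (φ' - B) = ∞`) and
`s = B ∫ Λ / ∫ θ (φ' - B) < 1`; this keeps `φ' - s θ (φ' - B) > B` near `0`. The correction `h` is
compactly supported in `(0, 1)` with total integral `0`, so `φ + ∫ h` agrees with `φ` near both
ends, is still a bijection onto `ℝ`, and has derivative `φ' + h > B`.
-/

open Set Filter Topology Function MeasureTheory

theorem IsPreconnected.forall_lt_of_forall_ne {X β : Type*} [TopologicalSpace X] [LinearOrder β]
    [TopologicalSpace β] [OrderClosedTopology β] {s : Set X} {f : X → β} {c : β}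
    (hs : IsPreconnected s) (hf : ContinuousOn f s) (hne : ∀ x ∈ s, f x ≠ c) {x₀ : X}
    (hx₀ : x₀ ∈ s) (hlt : c < f x₀) : ∀ x ∈ s, c < f x := by
  intro x hx
  by_contra! hle
  obtain ⟨y, hy, hyc⟩ := hs.intermediate_value hx hx₀ hf ⟨hle, hlt.le⟩
  exact hne y hy hyc

theorem strictMonoOn_Ioo_of_hasDerivAt_pos {f f' : ℝ → ℝ} {a b : ℝ}
    (hf : ∀ t ∈ Ioo a b, HasDerivAt f (f' t) t) (hpos : ∀ t ∈ Ioo a b, 0 < f' t) :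
    StrictMonoOn f (Ioo a b) := by
  refine strictMonoOn_of_hasDerivWithinAt_pos (f' := f') (convex_Ioo a b)
    (fun t ht => (hf t ht).continuousAt.continuousWithinAt) (fun t ht => ?_) (fun t ht => ?_)
  all_goals rw [interior_Ioo] at ht
  exacts [(hf t ht).hasDerivWithinAt, hpos t ht]

theorem StrictMonoOn.tendsto_nhdsGT_atBot_of_surjOn {α β : Type*} [LinearOrder α]
    [TopologicalSpace α] [OrderTopology α] [Preorder β] {f : α → β} {a b : α}
    (hf : StrictMonoOn f (Ioo a b)) (hsurj : SurjOn f (Ioo a b) univ) :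
    Tendsto f (𝓝[>] a) atBot := by
  refine tendsto_atBot.2 fun y => ?_
  obtain ⟨x, hx, rfl⟩ := hsurj (mem_univ y)
  filter_upwards [Ioo_mem_nhdsGT hx.1] with t ht
  exact hf.monotoneOn ⟨ht.1, ht.2.trans hx.2⟩ hx ht.2.le

theorem Set.SurjOn.of_eqOn_diff_Ioo {α β : Type*} [ConditionallyCompleteLinearOrder α]
    [TopologicalSpace α] [OrderTopology α] [DenselyOrdered α] [LinearOrder β] [TopologicalSpace β]
    [OrderClosedTopology β] {f g : α → β} {s : Set α} {t : Set β} {a b : α}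
    (hsurj : SurjOn f s t) (hf : MonotoneOn f s) (hg : ContinuousOn g (Icc a b))
    (hab : a ≤ b) (hsub : Icc a b ⊆ s) (hfg : EqOn f g (s \ Ioo a b)) : SurjOn g s t := by
  intro y hy
  obtain ⟨x, hx, rfl⟩ := hsurj hy
  by_cases hxab : x ∈ Ioo a b
  · have ha : a ∈ s \ Ioo a b := ⟨hsub (left_mem_Icc.2 hab), fun h => h.1.false⟩
    have hb : b ∈ s \ Ioo a b := ⟨hsub (right_mem_Icc.2 hab), fun h => h.2.false⟩
    have hfx : f x ∈ Icc (g a) (g b) := by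
      rw [← hfg ha, ← hfg hb]
      exact ⟨hf ha.1 hx hxab.1.le, hf hx hb.1 hxab.2.le⟩
    exact image_mono hsub (intermediate_value_Icc hab hg hfx)
  · exact ⟨x, hx, (hfg ⟨hx, hxab⟩).symm⟩

theorem intervalIntegral.integral_eq_zero_of_notMem_Ioo {E : Type*} [NormedAddCommGroup E]
    [NormedSpace ℝ E] {μ : Measure ℝ} {h : ℝ → E} {a b t : ℝ} (hsupp : support h ⊆ Ioo a b)
    (hint : ∫ x, h x ∂μ = 0) (ht : t ∉ Ioo a b) : ∫ x in a..t, h x ∂μ = 0 := by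
  rcases le_or_gt t a with hta | hat
  · refine intervalIntegral.integral_zero_ae (Eventually.of_forall fun x hx => ?_)
    rw [uIoc_of_ge hta] at hx
    exact notMem_support.1 fun hxs => (hsupp hxs).1.not_ge hx.2
  · have hbt : b ≤ t := by by_contra! hbt; exact ht ⟨hat, hbt⟩
    rw [intervalIntegral.integral_eq_integral_of_support_subset
      (hsupp.trans (Ioo_subset_Ioc_self.trans (Ioc_subset_Ioc_right hbt))), hint]

theorem exists_bump_eqOn_one_Icc {p q r : ℝ} (hpq : p < q) (hr : 0 < r) :
    ∃ θ : ℝ → ℝ, Continuous θ ∧ (∀ x, θ x ∈ Icc 0 1) ∧ EqOn θ 1 (Icc p q) ∧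
      support θ = Ioo (p - r) (q + r) ∧ tsupport θ = Icc (p - r) (q + r) := by
  let θ : ContDiffBump ((p + q) / 2) :=
    ⟨(q - p) / 2, (q - p) / 2 + r, by linarith, by linarith⟩
  refine ⟨θ, θ.continuous, fun x => ⟨θ.nonneg, θ.le_one⟩, fun x hx => θ.one_of_mem_closedBall ?_,
    ?_, ?_⟩
  · rw [Real.closedBall_eq_Icc]
    convert hx using 2 <;> simp only [θ] <;> ring
  · rw [θ.support_eq, Real.ball_eq_Ioo]
    congr 1 <;> simp only [θ] <;> ring
  · rw [θ.tsupport_eq, Real.closedBall_eq_Icc]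
    congr 1 <;> simp only [θ] <;> ring

theorem exists_continuous_le_integral_ge_of_tendsto_atBot {w Φ : ℝ → ℝ} {c : ℝ} (hc : 0 < c)
    (hΦ : ∀ t ∈ Ioo 0 c, HasDerivAt Φ (w t) t) (hw : ContinuousOn w (Ioo 0 c))
    (hw₀ : ∀ t ∈ Ioo 0 c, 0 ≤ w t) (hΦbot : Tendsto Φ (𝓝[>] 0) atBot) (K : ℝ) :
    ∃ Θ : ℝ → ℝ, Continuous Θ ∧ (∃ a, 0 < a ∧ support Θ ⊆ Ioo a c) ∧ (∀ t, 0 ≤ Θ t) ∧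
      (∀ t ∈ Ioo 0 c, Θ t ≤ w t) ∧ K ≤ ∫ t, Θ t := by
  obtain ⟨δ, hδK, hδ⟩ : ∃ δ, Φ δ ≤ Φ (c / 2) - K ∧ δ ∈ Ioo 0 (c / 2) :=
    ((hΦbot.eventually (eventually_le_atBot _)).and (Ioo_mem_nhdsGT (half_pos hc))).exists
  obtain ⟨θ, hθ, hθ01, hθ1, hθs, hθts⟩ := exists_bump_eqOn_one_Icc hδ.2 (half_pos hδ.1)
  have htsupp : tsupport θ ⊆ Ioo 0 c := by
    rw [hθts]
    exact fun t ht => ⟨by linarith [ht.1, hδ.1], by linarith [ht.2, hδ.2]⟩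
  have hθ₀ : ∀ t ∉ Ioo 0 c, θ t = 0 := fun t ht =>
    image_eq_zero_of_notMem_tsupport fun h => ht (htsupp h)
  have hΘ : Continuous fun t => θ t * w t :=
    (hθ.continuousOn.mul hw).continuous_of_tsupport_subset isOpen_Ioo
      (tsupport_mul_subset_left.trans htsupp)
  have hΘ₀ : ∀ t, 0 ≤ θ t * w t := by
    intro t
    by_cases ht : t ∈ Ioo 0 c
    · exact mul_nonneg (hθ01 t).1 (hw₀ t ht)
    · simp [hθ₀ t ht]
  have hsub : Icc δ (c / 2) ⊆ Ioo 0 c := fun t ht =>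
    ⟨by linarith [ht.1, hδ.1], by linarith [ht.2]⟩
  refine ⟨fun t => θ t * w t, hΘ, ⟨δ / 2, half_pos hδ.1, ?_⟩, hΘ₀,
    fun t ht => mul_le_of_le_one_left (hw₀ t ht) (hθ01 t).2, ?_⟩
  · refine (support_mul_subset_left _ _).trans fun t ht => ?_
    rw [hθs] at ht
    exact ⟨by linarith [ht.1], by linarith [ht.2, hδ.2]⟩
  have hint : Integrable fun t => θ t * w t :=
    hΘ.integrable_of_hasCompactSupport
      (HasCompactSupport.mul_right (f' := w)
        (by rw [HasCompactSupport, hθts]; exact isCompact_Icc))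
  calc K ≤ Φ (c / 2) - Φ δ := by linarith
    _ = ∫ t in δ..c / 2, w t := by
      refine (intervalIntegral.integral_eq_sub_of_hasDerivAt (fun t ht => hΦ t (hsub ?_))
        ((hw.mono hsub).intervalIntegrable_of_Icc hδ.2.le)).symm
      rwa [uIcc_of_le hδ.2.le] at ht
    _ = ∫ t in Ioc δ (c / 2), θ t * w t := by
      rw [intervalIntegral.integral_of_le hδ.2.le]
      refine setIntegral_congr_fun measurableSet_Ioc fun t ht => ?_
      rw [hθ1 (Ioc_subset_Icc_self ht), Pi.one_apply, one_mul]
    _ ≤ ∫ t, θ t * w t := setIntegral_le_integral hint (Eventually.of_forall hΘ₀)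

theorem exists_integral_eq_zero_lt_add {φ φ' : ℝ → ℝ}
    (hφ : ∀ t ∈ Ioo 0 1, HasDerivAt φ (φ' t) t) (hφ' : ContinuousOn φ' (Ioo 0 1))
    (hpos : ∀ t ∈ Ioo 0 1, 0 < φ' t) (hbot : Tendsto φ (𝓝[>] 0) atBot) {B c d : ℝ}
    (hB : 0 ≤ B) (hc : 0 < c) (hcd : c < d) (hd : d < 1)
    (hleft : ∀ t ∈ Ioo 0 c, B < φ' t) (hright : ∀ t ∈ Ioo d 1, B < φ' t) :
    ∃ h : ℝ → ℝ, Continuous h ∧ (∃ a b, 0 < a ∧ a < b ∧ b < 1 ∧ support h ⊆ Ioo a b) ∧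
      ∫ t, h t = 0 ∧ ∀ t ∈ Ioo 0 1, B < φ' t + h t := by
  obtain ⟨r, hr, hrc, hrd⟩ : ∃ r, 0 < r ∧ r < c ∧ d + r < 1 :=
    ⟨min c (1 - d) / 2, by positivity, by linarith [min_le_left c (1 - d)],
      by linarith [min_le_right c (1 - d)]⟩
  obtain ⟨Λ, hΛ, hΛ01, hΛ1, hΛs, hΛts⟩ := exists_bump_eqOn_one_Icc hcd hr
  have hΛint : Integrable Λ :=
    hΛ.integrable_of_hasCompactSupport (by rw [HasCompactSupport, hΛts]; exact isCompact_Icc)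
  set M := B * ∫ t, Λ t
  have hM : 0 ≤ M := mul_nonneg hB (integral_nonneg fun t => (hΛ01 t).1)
  have hsub : Ioo 0 c ⊆ Ioo 0 1 := Ioo_subset_Ioo_right (hcd.trans hd).le
  have hprim : Tendsto (fun t => φ t - t * B) (𝓝[>] 0) atBot := by
    simpa [sub_eq_add_neg] using hbot.atBot_add
      (((continuous_id.mul continuous_const).neg.tendsto 0).mono_left nhdsWithin_le_nhds)
  -- The mass `M` added in the middle is taken back near `0`, where `φ' - B` is not integrable.
  obtain ⟨Θ, hΘ, ⟨a, ha, hΘs⟩, hΘ₀, hΘw, hΘM⟩ :=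
    exists_continuous_le_integral_ge_of_tendsto_atBot (w := fun t => φ' t - B)
      (Φ := fun t => φ t - t * B) hc (fun t ht => (hφ t (hsub ht)).sub (hasDerivAt_mul_const B))
      ((hφ'.mono hsub).sub continuousOn_const) (fun t ht => sub_nonneg.2 (hleft t ht).le) hprim
      (M + 1)
  have hΘint : Integrable Θ :=
    hΘ.integrable_of_hasCompactSupport (HasCompactSupport.intro isCompact_Icc fun t ht =>
      notMem_support.1 fun hts => ht (Ioo_subset_Icc_self (hΘs hts)))
  set s := M / ∫ t, Θ t
  have hI : 0 < ∫ t, Θ t := by linarith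
  have hs₀ : 0 ≤ s := div_nonneg hM hI.le
  have hs₁ : s < 1 := (div_lt_one hI).2 (by linarith)
  have hΘc : ∀ t, c ≤ t → Θ t = 0 := fun t ht =>
    notMem_support.1 fun hts => (hΘs hts).2.not_ge ht
  refine ⟨fun t => B * Λ t - s * Θ t, by fun_prop, ⟨min a (c - r), d + r,
    lt_min ha (by linarith), (min_le_right _ _).trans_lt (by linarith), hrd, ?_⟩, ?_, ?_⟩
  · refine (support_sub _ _).trans (union_subset ?_ ?_)
    · exact (support_mul_subset_right _ _).trans (hΛs ▸ Ioo_subset_Ioo_left (min_le_right _ _))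
    · exact (support_mul_subset_right _ _).trans
        (hΘs.trans (Ioo_subset_Ioo (min_le_left _ _) (by linarith)))
  · rw [integral_sub (hΛint.const_mul B) (hΘint.const_mul s), integral_const_mul,
      integral_const_mul]
    exact sub_eq_zero.2 (div_mul_cancel₀ M hI.ne').symm
  · intro t ht
    dsimp only
    have hΛ₀ := (hΛ01 t).1
    rcases lt_or_ge t c with htc | hct
    · have := mul_le_mul_of_nonneg_left (hΘw t ⟨ht.1, htc⟩) hs₀
      have := mul_pos (sub_pos.2 hs₁) (sub_pos.2 (hleft t ⟨ht.1, htc⟩))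
      nlinarith
    rw [hΘc t hct]
    rcases le_or_gt t d with htd | hdt
    · rw [hΛ1 ⟨hct, htd⟩]
      simp [hpos t ht]
    · nlinarith [hright t ⟨hdt, ht.2⟩]

theorem exists_bijOn_hasDerivAt_add_of_integral_eq_zero {φ φ' h : ℝ → ℝ}
    (hφ : ∀ t ∈ Ioo 0 1, HasDerivAt φ (φ' t) t) (hbij : BijOn φ (Ioo 0 1) univ)
    (hmono : MonotoneOn φ (Ioo 0 1)) (hh : Continuous h) {a b : ℝ} (ha : 0 < a) (hab : a ≤ b)
    (hb : b < 1) (hsupp : support h ⊆ Ioo a b) (hint : ∫ t, h t = 0)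
    (hpos : ∀ t ∈ Ioo 0 1, 0 < φ' t + h t) :
    ∃ ψ : ℝ → ℝ, (∀ t ∈ Ioo 0 1, HasDerivAt ψ (φ' t + h t) t) ∧ BijOn ψ (Ioo 0 1) univ ∧
      ∃ ε > 0, (∀ t ∈ Ioo 0 ε, ψ t = φ t) ∧ ∀ t ∈ Ioo (1 - ε) 1, ψ t = φ t := by
  set ψ := fun t => φ t + ∫ u in a..t, h u
  have hψ : ∀ t ∈ Ioo 0 1, HasDerivAt ψ (φ' t + h t) t := fun t ht =>
    (hφ t ht).add (hh.integral_hasStrictDerivAt a t).hasDerivAt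
  have hψφ : ∀ t ∉ Ioo a b, ψ t = φ t := fun t ht => by
    simp [ψ, intervalIntegral.integral_eq_zero_of_notMem_Ioo hsupp hint ht]
  have hsub : Icc a b ⊆ Ioo 0 1 := Icc_subset_Ioo ha hb
  refine ⟨ψ, hψ, ⟨mapsTo_univ _ _, (strictMonoOn_Ioo_of_hasDerivAt_pos hψ hpos).injOn, ?_⟩,
    min a (1 - b), lt_min ha (by linarith),
    fun t ht => hψφ t fun h => (ht.2.trans_le (min_le_left _ _)).not_gt h.1,
    fun t ht => hψφ t fun h => (ht.1.trans_le' (by linarith [min_le_right a (1 - b)])).not_gt h.2⟩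
  exact hbij.surjOn.of_eqOn_diff_Ioo hmono
    (fun t ht => (hψ t (hsub ht)).continuousAt.continuousWithinAt) hab hsub
    fun t ht => (hψφ t ht.2).symm

theorem stmt_0_general (φ φ' : ℝ → ℝ)
    (hderiv : ∀ t ∈ Ioo (0:ℝ) 1, HasDerivAt φ (φ' t) t)
    (hderiv_cont : ContinuousOn φ' (Ioo (0:ℝ) 1))
    (hderiv_ne : ∀ t ∈ Ioo (0:ℝ) 1, φ' t ≠ 0)
    (hbij : BijOn φ (Ioo (0:ℝ) 1) univ)
    (hblow0 : Tendsto φ' (nhdsWithin 0 (Ioo (0:ℝ) 1)) atTop)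
    (hblow1 : Tendsto φ' (nhdsWithin 1 (Ioo (0:ℝ) 1)) atTop)
    (A : ℝ) :
    ∃ ψ ψ' : ℝ → ℝ,
      (∀ t ∈ Ioo (0:ℝ) 1, HasDerivAt ψ (ψ' t) t) ∧
      ContinuousOn ψ' (Ioo (0:ℝ) 1) ∧
      BijOn ψ (Ioo (0:ℝ) 1) univ ∧
      (∀ t ∈ Ioo (0:ℝ) 1, A < ψ' t) ∧
      (∃ ε > 0, (∀ t ∈ Ioo (0:ℝ) ε, ψ t = φ t) ∧ (∀ t ∈ Ioo (1 - ε) 1, ψ t = φ t)) := by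
  rw [nhdsWithin_Ioo_eq_nhdsGT one_pos] at hblow0
  rw [nhdsWithin_Ioo_eq_nhdsLT one_pos] at hblow1
  obtain ⟨c, hc, hleft⟩ := (mem_nhdsGT_iff_exists_mem_Ioc_Ioo_subset
    (by norm_num : (0:ℝ) < 1 / 3)).1 (hblow0.eventually (eventually_gt_atTop |A|))
  obtain ⟨d, hd, hright⟩ := (mem_nhdsLT_iff_exists_mem_Ico_Ioo_subset
    (by norm_num : (2:ℝ) / 3 < 1)).1 (hblow1.eventually (eventually_gt_atTop |A|))
  have hpos : ∀ t ∈ Ioo (0:ℝ) 1, 0 < φ' t :=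
    isPreconnected_Ioo.forall_lt_of_forall_ne hderiv_cont hderiv_ne (x₀ := c / 2)
      ⟨half_pos hc.1, by linarith [hc.2]⟩
      ((abs_nonneg A).trans_lt (hleft ⟨half_pos hc.1, half_lt_self hc.1⟩))
  have hmono := strictMonoOn_Ioo_of_hasDerivAt_pos hderiv hpos
  obtain ⟨h, hh, ⟨a, b, ha, hab, hb, hsupp⟩, hint, hgt⟩ :=
    exists_integral_eq_zero_lt_add hderiv hderiv_cont hpos
      (hmono.tendsto_nhdsGT_atBot_of_surjOn hbij.surjOn) (abs_nonneg A) hc.1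
      (hc.2.trans_lt ((by norm_num : (1:ℝ) / 3 < 2 / 3).trans_le hd.1)) hd.2 hleft hright
  obtain ⟨ψ, hψ, hψbij, hψφ⟩ := exists_bijOn_hasDerivAt_add_of_integral_eq_zero hderiv hbij
    hmono.monotoneOn hh ha hab.le hb hsupp hint fun t ht => (abs_nonneg A).trans_lt (hgt t ht)
  exact ⟨ψ, fun t => φ' t + h t, hψ, hderiv_cont.add hh.continuousOn, hψbij,
    fun t ht => (le_abs_self A).trans_lt (hgt t ht), hψφ⟩

/-- Any C¹ diffeomorphism from (0,1) onto ℝ whose derivative blows up at both ends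
can be modified, keeping it unchanged near the ends, so that its derivative exceeds
any given constant A > 1. -/
theorem stmt_0 (φ φ' : ℝ → ℝ)
    (hderiv : ∀ t ∈ Ioo (0:ℝ) 1, HasDerivAt φ (φ' t) t)
    (hderiv_cont : ContinuousOn φ' (Ioo (0:ℝ) 1))
    (hderiv_ne : ∀ t ∈ Ioo (0:ℝ) 1, φ' t ≠ 0)
    (hbij : BijOn φ (Ioo (0:ℝ) 1) univ)
    (hblow0 : Tendsto φ' (nhdsWithin 0 (Ioo (0:ℝ) 1)) atTop)
    (hblow1 : Tendsto φ' (nhdsWithin 1 (Ioo (0:ℝ) 1)) atTop)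
    (A : ℝ) (hA : 1 < A) :
    ∃ ψ ψ' : ℝ → ℝ,
      (∀ t ∈ Ioo (0:ℝ) 1, HasDerivAt ψ (ψ' t) t) ∧
      ContinuousOn ψ' (Ioo (0:ℝ) 1) ∧
      BijOn ψ (Ioo (0:ℝ) 1) univ ∧
      (∀ t ∈ Ioo (0:ℝ) 1, A < ψ' t) ∧
      (∃ ε > 0, (∀ t ∈ Ioo (0:ℝ) ε, ψ t = φ t) ∧ (∀ t ∈ Ioo (1 - ε) 1, ψ t = φ t)) :=
  stmt_0_general φ φ' hderiv hderiv_cont hderiv_ne hbij hblow0 hblow1 A
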